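/- arXiv:2402.02467 — 2 statements merged into one kernel-verified Lean document; each statement's English description precedes it below -/
import Mathlib

section
/- Let Λ > 0 and let c, d ≥ 0 satisfy c + d² > 0, and set w(s,t) = log( 2Λ / (cΛ² + s² + (t+dΛ)²) ) on the closed upper half-plane, and β = 2πd/√(d² + c). Then d · ∫_{∂ℝ²₊} e^{w} dl = β and c · ∫_{ℝ²₊} e^{2w} dx = 2π − β. -/
/-!
On the boundary, `e^w = 2Λ / ((c + d²)Λ² + s²)` is a Cauchy-type density of total mass
`2π / √(c + d²)`. In the interior, integrating `e^{2w}` first in `s` with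
`∫ (A + s²)⁻² ds = π / (2 A^{3/2})` leaves `2πΛ² ∫₀^∞ (cΛ² + (t + dΛ)²)^{-3/2} dt`, which
`u ↦ u / (B √(B + u²))` integrates in closed form; multiplied by `c` this is `2π - β`.
The integrals in `s` reduce to the case `A = 1` by scaling.
-/

open MeasureTheory Filter

noncomputable section

/-- Euclidean norm on `ℝ × ℝ`. -/
def nrm (p : ℝ × ℝ) : ℝ := Real.sqrt (p.1 ^ 2 + p.2 ^ 2)

/-- Euclidean Laplacian `Δw = ∂²w/∂s² + ∂²w/∂t²` of `w : ℝ × ℝ → ℝ`. -/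
def lap (w : ℝ × ℝ → ℝ) (p : ℝ × ℝ) : ℝ :=
  deriv (fun s => deriv (fun s' => w (s', p.2)) s) p.1 +
    deriv (fun t => deriv (fun t' => w (p.1, t')) t) p.2

/-- The open upper half-plane `ℝ²₊`. -/
def upperHalf : Set (ℝ × ℝ) := {p | 0 < p.2}

/-- The closed upper half-plane. -/
def closedUpperHalf : Set (ℝ × ℝ) := {p | 0 ≤ p.2}

open Real Set Topology

lemma tendsto_div_one_add_sq_cocompact :
    Tendsto (fun x : ℝ => x / (1 + x ^ 2)) (cocompact ℝ) (𝓝 0) := by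
  have hinv : Tendsto (fun x : ℝ => x⁻¹) (cocompact ℝ) (𝓝 0) := by
    rw [cocompact_eq_atBot_atTop]
    exact tendsto_inv_atBot_zero.sup tendsto_inv_atTop_zero
  have h := hinv.div ((hinv.pow 2).const_add 1) (by norm_num)
  rw [zero_div] at h
  refine h.congr' ?_
  filter_upwards [(isCompact_singleton : IsCompact {(0 : ℝ)}).compl_mem_cocompact] with x hx
  have hx : x ≠ 0 := hx
  simp only [Pi.div_apply]
  field_simp
  ring

lemma integrable_inv_one_add_sq_sq : Integrable fun x : ℝ => ((1 + x ^ 2) ^ 2)⁻¹ := by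
  refine integrable_inv_one_add_sq.mono (by fun_prop) (ae_of_all _ fun x => ?_)
  have h : 1 + x ^ 2 ≤ (1 + x ^ 2) ^ 2 := by nlinarith [sq_nonneg x]
  rw [norm_inv, norm_inv, norm_of_nonneg (by positivity), norm_of_nonneg (by positivity)]
  exact inv_anti₀ (by positivity) h

lemma integral_inv_one_add_sq_sq : ∫ x : ℝ, ((1 + x ^ 2) ^ 2)⁻¹ = π / 2 := by
  set F : ℝ → ℝ := fun x => (x / (1 + x ^ 2) + arctan x) / 2
  have hderiv (x : ℝ) : HasDerivAt F ((1 + x ^ 2) ^ 2)⁻¹ x := by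
    have hx : 1 + x ^ 2 ≠ 0 := by positivity
    have := (((hasDerivAt_id x).div ((hasDerivAt_pow 2 x).const_add 1) hx).add
      (hasDerivAt_arctan x)).div_const 2
    refine this.congr_deriv ?_
    simp only [id, Nat.cast_ofNat]
    field_simp
    ring
  have hlim {l : Filter ℝ} (hl : l ≤ cocompact ℝ) {a : ℝ} (ha : Tendsto arctan l (𝓝 a)) :
      Tendsto F l (𝓝 (a / 2)) := by
    simpa using ((tendsto_div_one_add_sq_cocompact.mono_left hl).add ha).div_const 2
  rw [integral_of_hasDerivAt_of_tendsto hderiv integrable_inv_one_add_sq_sq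
    (hlim atBot_le_cocompact (tendsto_nhds_of_tendsto_nhdsWithin tendsto_arctan_atBot))
    (hlim atTop_le_cocompact (tendsto_nhds_of_tendsto_nhdsWithin tendsto_arctan_atTop))]
  ring

section Scaling

variable {A : ℝ}

lemma inv_add_sq_pow_eq (hA : 0 < A) (n : ℕ) (x : ℝ) :
    ((A + x ^ 2) ^ n)⁻¹ = (A ^ n)⁻¹ * ((1 + (x / √A) ^ 2) ^ n)⁻¹ := by
  rw [← mul_inv, ← mul_pow, div_pow, sq_sqrt hA.le, mul_add, mul_one, mul_div_cancel₀ _ hA.ne']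

lemma MeasureTheory.Integrable.inv_add_sq_pow {n : ℕ}
    (h : Integrable fun x : ℝ => ((1 + x ^ 2) ^ n)⁻¹) (hA : 0 < A) :
    Integrable fun x : ℝ => ((A + x ^ 2) ^ n)⁻¹ := by
  simp_rw [inv_add_sq_pow_eq hA]
  exact (h.comp_div (sqrt_pos.2 hA).ne').const_mul _

lemma integral_inv_add_sq_pow (hA : 0 < A) (n : ℕ) :
    ∫ x, ((A + x ^ 2) ^ n)⁻¹ = √A / A ^ n * ∫ x, ((1 + x ^ 2) ^ n)⁻¹ := by
  simp_rw [inv_add_sq_pow_eq hA, integral_const_mul,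
    Measure.integral_comp_div (fun x => ((1 + x ^ 2) ^ n)⁻¹), abs_of_pos (sqrt_pos.2 hA),
    smul_eq_mul]
  ring

lemma integral_inv_add_sq (hA : 0 < A) : ∫ x, (A + x ^ 2)⁻¹ = π / √A := by
  have h := integral_inv_add_sq_pow hA 1
  simp only [pow_one] at h
  rw [h, integral_univ_inv_one_add_sq, ← sq_sqrt hA.le]
  field_simp
  rw [sqrt_sq (sqrt_nonneg A)]

lemma integral_inv_add_sq_sq (hA : 0 < A) : ∫ x, ((A + x ^ 2) ^ 2)⁻¹ = π / (2 * A * √A) := by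
  rw [integral_inv_add_sq_pow hA, integral_inv_one_add_sq_sq, ← sq_sqrt hA.le]
  have := sqrt_pos.2 hA
  field_simp
  rw [sqrt_sq (sqrt_nonneg A)]

end Scaling

section HalfLine

variable {B : ℝ}

lemma hasDerivAt_div_mul_sqrt_add_sq (hB : 0 < B) (u : ℝ) :
    HasDerivAt (fun u => u / (B * √(B + u ^ 2))) ((B + u ^ 2) * √(B + u ^ 2))⁻¹ u := by
  have hQ : 0 < B + u ^ 2 := by positivity
  have hσ := sqrt_pos.2 hQ
  have h := (hasDerivAt_id u).div
    ((((hasDerivAt_pow 2 u).const_add B).sqrt hQ.ne').const_mul B) (by positivity)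
  refine h.congr_deriv ?_
  have hσ2 : √(B + u ^ 2) ^ 2 = B + u ^ 2 := sq_sqrt hQ.le
  simp only [id, Nat.cast_ofNat]
  field_simp
  linear_combination u ^ 2 * hσ2

lemma tendsto_div_mul_sqrt_add_sq (hB : 0 < B) :
    Tendsto (fun u => u / (B * √(B + u ^ 2))) atTop (𝓝 B⁻¹) := by
  have h : Tendsto (fun u : ℝ => B⁻¹ * (√(B * u⁻¹ ^ 2 + 1))⁻¹) atTop (𝓝 B⁻¹) := by
    simpa using
      ((((tendsto_inv_atTop_zero.pow 2).const_mul B).add_const 1).sqrt.inv₀ (by simp)).const_mul B⁻¹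
  refine h.congr' ?_
  filter_upwards [eventually_gt_atTop 0] with u hu
  rw [show B * u⁻¹ ^ 2 + 1 = (B + u ^ 2) / u ^ 2 by field_simp, sqrt_div' _ (sq_nonneg u),
    sqrt_sq hu.le]
  have := sqrt_pos.2 (show 0 < B + u ^ 2 by positivity)
  field_simp

lemma integral_Ioi_inv_add_sq_mul_sqrt (hB : 0 < B) (e : ℝ) :
    ∫ t in Ioi 0, ((B + (t + e) ^ 2) * √(B + (t + e) ^ 2))⁻¹ = (1 - e / √(B + e ^ 2)) / B := by
  have hderiv (t : ℝ) := (hasDerivAt_div_mul_sqrt_add_sq hB (t + e)).comp_add_const t e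
  rw [integral_Ioi_of_hasDerivAt_of_nonneg' (a := 0) (fun t _ => hderiv t)
    (fun t _ => by positivity)
    ((tendsto_div_mul_sqrt_add_sq hB).comp (tendsto_atTop_add_const_right _ e tendsto_id))]
  have := sqrt_pos.2 (show 0 < B + e ^ 2 by positivity)
  simp only [zero_add]
  field_simp

lemma integrableOn_Ioi_inv_add_sq_mul_sqrt (hB : 0 < B) (e : ℝ) :
    IntegrableOn (fun t => ((B + (t + e) ^ 2) * √(B + (t + e) ^ 2))⁻¹) (Ioi 0) :=
  integrableOn_Ioi_deriv_of_nonneg'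
    (fun t _ => (hasDerivAt_div_mul_sqrt_add_sq hB (t + e)).comp_add_const t e)
    (fun t _ => by positivity)
    ((tendsto_div_mul_sqrt_add_sq hB).comp (tendsto_atTop_add_const_right _ e tendsto_id))

end HalfLine

lemma volume_restrict_upperHalf :
    volume.restrict upperHalf = (volume : Measure ℝ).prod (volume.restrict (Ioi 0)) := by
  rw [show upperHalf = univ ×ˢ Ioi 0 by ext; simp [upperHalf], Measure.volume_eq_prod,
    ← Measure.prod_restrict, Measure.restrict_univ]

lemma integral_upperHalf_inv_sq {B : ℝ} (hB : 0 < B) (e : ℝ) :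
    ∫ p in upperHalf, ((B + (p.2 + e) ^ 2 + p.1 ^ 2) ^ 2)⁻¹ =
      π / 2 * (1 - e / √(B + e ^ 2)) / B := by
  set f : ℝ × ℝ → ℝ := fun p => ((B + (p.2 + e) ^ 2 + p.1 ^ 2) ^ 2)⁻¹
  have hA (t : ℝ) : 0 < B + (t + e) ^ 2 := by positivity
  have hfibre (t : ℝ) :
      ∫ s, f (s, t) = π / 2 * ((B + (t + e) ^ 2) * √(B + (t + e) ^ 2))⁻¹ := by
    rw [integral_inv_add_sq_sq (hA t)]
    field_simp
  have hf : Integrable f ((volume : Measure ℝ).prod (volume.restrict (Ioi 0))) := by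
    refine (integrable_prod_iff' (by fun_prop)).2
      ⟨ae_of_all _ fun t => integrable_inv_one_add_sq_sq.inv_add_sq_pow (hA t), ?_⟩
    have hnorm (p : ℝ × ℝ) : ‖f p‖ = f p := norm_of_nonneg (by positivity)
    simp_rw [hnorm, hfibre]
    exact (integrableOn_Ioi_inv_add_sq_mul_sqrt hB e).const_mul _
  rw [volume_restrict_upperHalf, integral_prod_symm f hf]
  simp_rw [hfibre]
  rw [integral_const_mul, integral_Ioi_inv_add_sq_mul_sqrt hB e]
  ring

/-- For the bubble `w(s,t) = log( 2Λ / (cΛ² + s² + (t+dΛ)²) )` on the closed upper half-plane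
and `β = 2πd/√(d²+c)`, one has `d ∫_{∂ℝ²₊} e^{w} dl = β` and `c ∫_{ℝ²₊} e^{2w} dx = 2π − β`. -/
theorem bubble_curvature_quantization (Λ c d : ℝ) (hΛ : 0 < Λ) (hc : 0 ≤ c) (hd : 0 ≤ d)
    (hcd : 0 < c + d ^ 2) (w : ℝ × ℝ → ℝ)
    (hw : ∀ p : ℝ × ℝ,
      w p = Real.log (2 * Λ / (c * Λ ^ 2 + p.1 ^ 2 + (p.2 + d * Λ) ^ 2)))
    (β : ℝ) (hβ : β = 2 * Real.pi * d / Real.sqrt (d ^ 2 + c)) :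
    d * (∫ s : ℝ, Real.exp (w (s, 0))) = β ∧
    c * (∫ p in upperHalf, Real.exp (2 * w p)) = 2 * Real.pi - β := by
  have hsqrt : √((c + d ^ 2) * Λ ^ 2) = √(d ^ 2 + c) * Λ := by
    rw [sqrt_mul hcd.le, sqrt_sq hΛ.le, add_comm]
  have hsqrt_pos : 0 < √(d ^ 2 + c) := sqrt_pos.2 (by linarith)
  have hboundary (s : ℝ) : exp (w (s, 0)) = 2 * Λ * ((c + d ^ 2) * Λ ^ 2 + s ^ 2)⁻¹ := by
    rw [hw, show c * Λ ^ 2 + s ^ 2 + (0 + d * Λ) ^ 2 = (c + d ^ 2) * Λ ^ 2 + s ^ 2 by ring,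
      exp_log (by positivity)]
    ring
  refine ⟨?_, ?_⟩
  · simp_rw [hboundary]
    rw [integral_const_mul, integral_inv_add_sq (by positivity), hsqrt, hβ]
    field_simp
  rcases hc.eq_or_lt with rfl | hc
  · have hd : 0 < d := hd.lt_of_ne (by rintro rfl; simp at hcd)
    simp [hβ, sqrt_sq hd.le, hd.ne']
  have hinterior (p : ℝ × ℝ) :
      exp (2 * w p) = (2 * Λ) ^ 2 * ((c * Λ ^ 2 + (p.2 + d * Λ) ^ 2 + p.1 ^ 2) ^ 2)⁻¹ := by
    rw [hw, two_mul, exp_add, exp_log (by positivity)]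
    field_simp
    ring
  simp_rw [hinterior]
  rw [integral_const_mul, integral_upperHalf_inv_sq (by positivity), hβ,
    show c * Λ ^ 2 + (d * Λ) ^ 2 = (c + d ^ 2) * Λ ^ 2 by ring, hsqrt]
  field_simp
end
end

section
/- Let a ∈ ℝ and let w : B₁⁺ → ℝ be Lebesgue measurable such that e^{2|w|} ∈ L^p(B₁⁺) for every p ∈ [1,∞) and ∫_{B₁⁺} |x|^{2−2a} e^{2w(x)} dx < ∞. Then a ≤ 2. -/
open MeasureTheory Filter

noncomputable section

/-- The open upper half-ball `B_r⁺` of radius `r` centered at `0`. -/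
def ballPlus (r : ℝ) : Set (ℝ × ℝ) := {p | nrm p < r ∧ 0 < p.2}

/-- The closed upper half-ball `B̄_r⁺` of radius `r` centered at `0`. -/
def cballPlus (r : ℝ) : Set (ℝ × ℝ) := {p | nrm p ≤ r ∧ 0 ≤ p.2}

/-- Squared Euclidean gradient `|∇u|² = (∂u/∂s)² + (∂u/∂t)²`. -/
def gradSq (u : ℝ × ℝ → ℝ) (p : ℝ × ℝ) : ℝ :=
  (deriv (fun s => u (s, p.2)) p.1) ^ 2 + (deriv (fun t => u (p.1, t)) p.2) ^ 2


/-! If `a > 2`, weighted AM–GM with weights `1/(a-1)` and `(a-2)/(a-1)` writes `|x|^{-2}` as a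
geometric mean of `|x|^{2-2a} e^{2w}` and `e^{-2w/(a-2)}`, so `|x|^{-2}` is dominated by
`|x|^{2-2a} e^{2w} + e^{2p|w|}` for `p ≥ 1/(a-2)` and would be integrable on `B₁⁺`. It is not:
on the triangle `0 < t < s < 1/2` one has `|x|^{-2} ≥ (2s²)⁻¹`, and integrating in `t` first
leaves `∫₀^{1/2} ds / (2s) = ∞`. -/

open scoped ENNReal in
theorem setLIntegral_regionBetween_comp_fst {α : Type*} [MeasurableSpace α] {μ : Measure α}
    [SFinite μ] {F : α → ℝ≥0∞} {f g : α → ℝ} {s : Set α} (hF : Measurable F) (hf : Measurable f)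
    (hg : Measurable g) (hs : MeasurableSet s) :
    ∫⁻ p in regionBetween f g s, F p.1 ∂μ.prod volume =
      ∫⁻ x in s, F x * ENNReal.ofReal (g x - f x) ∂μ := by
  rw [← withDensity_apply _ (measurableSet_regionBetween hf hg hs), ← prod_withDensity_left hF,
    volume_regionBetween_eq_lintegral' hf hg hs,
    setLIntegral_withDensity_eq_setLIntegral_mul _ hF (by fun_prop) hs]
  rfl

open Set in
theorem setLIntegral_ofReal_inv_Ioo_eq_top {c : ℝ} (hc : 0 < c) :
    ∫⁻ x in Ioo 0 c, ENNReal.ofReal x⁻¹ = ⊤ := by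
  by_contra hfin
  have hint : IntegrableOn (fun x : ℝ => x⁻¹) (Ioo 0 c) :=
    (lintegral_ofReal_ne_top_iff_integrable measurable_inv.aestronglyMeasurable
      (ae_restrict_of_forall_mem measurableSet_Ioo fun x hx => inv_nonneg.2 hx.1.le)).1 hfin
  have := (intervalIntegral.integrableOn_Ioo_rpow_iff hc).1
    (hint.congr_fun (fun x _ => (Real.rpow_neg_one x).symm) measurableSet_Ioo)
  norm_num at this

theorem continuous_nrm : Continuous nrm := by
  unfold nrm; fun_prop

theorem measurableSet_ballPlus (r : ℝ) : MeasurableSet (ballPlus r) :=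
  (isOpen_lt continuous_nrm continuous_const).inter (isOpen_lt continuous_const continuous_snd)
    |>.measurableSet

theorem nrm_pos_of_mem_ballPlus {r : ℝ} {x : ℝ × ℝ} (hx : x ∈ ballPlus r) : 0 < nrm x :=
  Real.sqrt_pos.2 (by have := hx.2; positivity)

open Set in
theorem setLIntegral_ballPlus_nrm_rpow_neg_two_eq_top :
    ∫⁻ x in ballPlus 1, ENNReal.ofReal (nrm x ^ (-2 : ℝ)) = ⊤ := by
  set T := regionBetween 0 id (Ioo (0 : ℝ) (1 / 2))
  have hT : T ⊆ ballPlus 1 := by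
    rintro ⟨s, t⟩ ⟨⟨hs0, hs⟩, ht0, hts⟩
    refine ⟨(Real.sqrt_lt' one_pos).2 ?_, ht0⟩
    simp only [Pi.zero_apply, id] at ht0 hts
    nlinarith
  have hbound : ∀ x ∈ T, ENNReal.ofReal (2 * x.1 ^ 2)⁻¹ ≤ ENNReal.ofReal (nrm x ^ (-2 : ℝ)) := by
    rintro ⟨s, t⟩ ⟨⟨hs0, -⟩, ht0, hts⟩
    simp only [Pi.zero_apply, id] at ht0 hts
    refine ENNReal.ofReal_le_ofReal ?_
    rw [nrm, Real.rpow_neg (Real.sqrt_nonneg _), Real.rpow_two, Real.sq_sqrt (by positivity)]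
    exact inv_anti₀ (by positivity) (by nlinarith)
  refine top_le_iff.1 ?_
  calc ⊤ = ∫⁻ s in Ioo (0 : ℝ) (1 / 2), ENNReal.ofReal (2 * s ^ 2)⁻¹ * ENNReal.ofReal (s - 0) := by
        have hrw : ∀ s ∈ Ioo (0 : ℝ) (1 / 2),
            ENNReal.ofReal (2 * s ^ 2)⁻¹ * ENNReal.ofReal (s - 0) =
              ENNReal.ofReal 2⁻¹ * ENNReal.ofReal s⁻¹ := fun s hs => by
          rw [sub_zero, ← ENNReal.ofReal_mul (by positivity), ← ENNReal.ofReal_mul (by positivity)]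
          congr 1
          field_simp [hs.1.ne']
        rw [setLIntegral_congr_fun measurableSet_Ioo hrw, lintegral_const_mul _ (by fun_prop),
          setLIntegral_ofReal_inv_Ioo_eq_top (by norm_num), ENNReal.mul_top (by simp)]
    _ = ∫⁻ x in T, ENNReal.ofReal (2 * x.1 ^ 2)⁻¹ := by
        rw [Measure.volume_eq_prod]
        exact (setLIntegral_regionBetween_comp_fst (f := 0) (g := id) (by fun_prop)
          measurable_const measurable_id measurableSet_Ioo).symm
    _ ≤ ∫⁻ x in T, ENNReal.ofReal (nrm x ^ (-2 : ℝ)) :=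
        setLIntegral_mono' (measurableSet_regionBetween measurable_const measurable_id
          measurableSet_Ioo) hbound
    _ ≤ ∫⁻ x in ballPlus 1, ENNReal.ofReal (nrm x ^ (-2 : ℝ)) := lintegral_mono_set hT

open Real in
theorem rpow_neg_two_le_add_exp {a p r y : ℝ} (ha : 2 < a) (hp : 1 ≤ p * (a - 2)) (hr : 0 < r) :
    r ^ (-2 : ℝ) ≤ r ^ (2 - 2 * a) * exp (2 * y) + exp (2 * p * |y|) := by
  set θ := (a - 1)⁻¹
  have hθ : θ ≤ 1 := inv_le_one_of_one_le₀ (by linarith)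
  have hθ0 : 0 ≤ θ := inv_nonneg.2 (by linarith)
  set u := r ^ (2 - 2 * a) * exp (2 * y)
  set v := exp (-(2 * y) / (a - 2))
  have hu : 0 ≤ u := by positivity
  have hsplit : r ^ (-2 : ℝ) = u ^ θ * v ^ (1 - θ) := by
    rw [mul_rpow (by positivity) (exp_nonneg _), ← rpow_mul hr.le, ← exp_mul, ← exp_mul,
      mul_assoc, ← exp_add]
    have ha1 : a - 1 ≠ 0 := by linarith
    have ha2 : a - 2 ≠ 0 := by linarith
    have hexp : (2 - 2 * a) * θ = -2 := by simp only [θ]; field_simp; ring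
    have hcancel : 2 * y * θ + -(2 * y) / (a - 2) * (1 - θ) = 0 := by
      simp only [θ]; field_simp; ring
    rw [hexp, hcancel, exp_zero, mul_one]
  have hv : v ≤ exp (2 * p * |y|) := by
    refine exp_le_exp.2 ((div_le_iff₀ (by linarith)).2 ?_)
    nlinarith [neg_le_abs y, abs_nonneg y, mul_le_mul_of_nonneg_left hp (abs_nonneg y)]
  calc r ^ (-2 : ℝ) = u ^ θ * v ^ (1 - θ) := hsplit
    _ ≤ θ * u + (1 - θ) * v :=
      geom_mean_le_arith_mean2_weighted hθ0 (by linarith) hu (exp_nonneg _) (by ring)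
    _ ≤ u + exp (2 * p * |y|) :=
      add_le_add (mul_le_of_le_one_left hu hθ)
        ((mul_le_of_le_one_left (exp_nonneg _) (by linarith)).trans hv)

theorem exponent_le_two_general (a : ℝ) (w : ℝ × ℝ → ℝ)
    (hLp : ∀ p : ℝ, 1 ≤ p →
      IntegrableOn (fun x => Real.exp (2 * p * |w x|)) (ballPlus 1))
    (hint : IntegrableOn (fun x => nrm x ^ (2 - 2 * a) * Real.exp (2 * w x)) (ballPlus 1)) :
    a ≤ 2 := by
  by_contra! ha
  set p := 1 + (a - 2)⁻¹
  have hp : 1 ≤ p * (a - 2) := by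
    rw [add_mul, inv_mul_cancel₀ (by linarith)]; linarith
  have hnrm : IntegrableOn (fun x => nrm x ^ (-2 : ℝ)) (ballPlus 1) := by
    refine (hint.add (hLp p (le_add_of_nonneg_right (inv_nonneg.2 (by linarith))))).mono'
      (continuous_nrm.measurable.pow_const _).aestronglyMeasurable
      (ae_restrict_of_forall_mem (measurableSet_ballPlus 1) fun x hx => ?_)
    have hr := nrm_pos_of_mem_ballPlus hx
    rw [Real.norm_of_nonneg (by positivity)]
    exact rpow_neg_two_le_add_exp ha hp hr
  exact hnrm.lintegral_lt_top.ne setLIntegral_ballPlus_nrm_rpow_neg_two_eq_top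

/-- If `e^{2|w|} ∈ L^p(B₁⁺)` for every `p ∈ [1,∞)` and `∫_{B₁⁺} |x|^{2−2a} e^{2w} dx < ∞`,
then `a ≤ 2`. -/
theorem exponent_le_two (a : ℝ) (w : ℝ × ℝ → ℝ) (hmeas : Measurable w)
    (hLp : ∀ p : ℝ, 1 ≤ p →
      IntegrableOn (fun x => Real.exp (2 * p * |w x|)) (ballPlus 1))
    (hint : IntegrableOn (fun x => nrm x ^ (2 - 2 * a) * Real.exp (2 * w x)) (ballPlus 1)) :
    a ≤ 2 :=
  exponent_le_two_general a w hLp hint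
end
end
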